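/- arXiv:2009.11452 — 2 statements merged into one kernel-verified Lean document; each statement's English description precedes it below -/
import Mathlib

section
/- Let Z be a nonempty set and ρ : Z × Z → ℝ a semi-metric (symmetric, nonnegative, vanishing on the diagonal). Then ρ is of negative type if and only if (Z, ρ) is embeddable in a Hilbert space as squared distance, i.e., there exist a real inner product space H and a map φ : Z → H such that ρ(z,z') = ‖φ(z) − φ(z')‖² for all z, z' ∈ Z. -/
/-!
If `ρ` has negative type, fix a base point `z₀`. The Gromov product kernel
`(ρ z z₀ + ρ w z₀ - ρ z w) / 2` is positive semidefinite: its quadratic form at weights `c` is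
`-1/2` times the negative-type form at `c` extended by the weight `-∑ c` at `z₀`, which has total
mass zero. Moore's theorem (the reproducing kernel Hilbert space of this kernel) realizes the
kernel as the Gram matrix of vectors `φ z`, and then `‖φ z - φ w‖ ^ 2 = ρ z w`.
Conversely, if `∑ a = 0` then `∑ a i * a j * ‖x i - x j‖ ^ 2 = -2 * ‖∑ a i • x i‖ ^ 2 ≤ 0`.
-/

universe u

open Finset
open scoped InnerProductSpace

def IsNegativeType {Z : Type*} (ρ : Z → Z → ℝ) : Prop :=
  ∀ n : ℕ, 2 ≤ n → ∀ (z : Fin n → Z) (a : Fin n → ℝ),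
    ∑ i, a i = 0 → ∑ i, ∑ j, a i * a j * ρ (z i) (z j) ≤ 0

/-- For `ρ = ‖φ · - φ ·‖ ^ 2` this is `⟪φ z - φ z₀, φ w - φ z₀⟫`. -/
noncomputable def gromovProduct {Z : Type*} (ρ : Z → Z → ℝ) (z₀ z w : Z) : ℝ :=
  (ρ z z₀ + ρ w z₀ - ρ z w) / 2

theorem sum_sum_option_elim_neg_sum {ι : Type*} [Fintype ι] (c : ι → ℝ)
    (M : Option ι → Option ι → ℝ) :
    ∑ o, ∑ o', o.elim (-∑ k, c k) c * o'.elim (-∑ k, c k) c * M o o' =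
      ∑ i, ∑ j, c i * c j * (M i j - M i none - M none j + M none none) := by
  set T := ∑ k, c k
  have h₁ : ∑ i, ∑ j, c i * c j * M (some i) none = ∑ i, c i * T * M (some i) none :=
    sum_congr rfl fun _ _ => by rw [mul_sum, sum_mul]
  have h₂ : ∑ i, ∑ j, c i * c j * M none (some j) = ∑ j, T * c j * M none (some j) := by
    rw [sum_comm]
    exact sum_congr rfl fun _ _ => by rw [sum_mul, sum_mul]
  have h₃ : ∑ i, ∑ j, c i * c j * M none none = T * T * M none none := by
    rw [sum_mul_sum, sum_mul]
    exact sum_congr rfl fun _ _ => by rw [sum_mul]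
  simp only [mul_add, mul_sub, sum_add_distrib, sum_sub_distrib, h₁, h₂, h₃,
    Fintype.sum_option, Option.elim, mul_neg, neg_mul, sum_neg_distrib]
  ring

theorem sum_sum_mul_norm_sub_sq {E : Type*} [SeminormedAddCommGroup E] [InnerProductSpace ℝ E]
    {ι : Type*} (s : Finset ι) (x : ι → E) (a : ι → ℝ) (ha : ∑ i ∈ s, a i = 0) :
    ∑ i ∈ s, ∑ j ∈ s, a i * a j * ‖x i - x j‖ ^ 2 = -2 * ‖∑ i ∈ s, a i • x i‖ ^ 2 := by
  have h₁ : ∑ i ∈ s, ∑ j ∈ s, a i * a j * ‖x i‖ ^ 2 = 0 := by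
    simp [mul_right_comm (a _) (a _), ← mul_sum, ha]
  have h₂ : ∑ i ∈ s, ∑ j ∈ s, a i * a j * ‖x j‖ ^ 2 = 0 := by
    simp [mul_assoc, ← mul_sum, ← sum_mul, ha]
  have h₃ : ‖∑ i ∈ s, a i • x i‖ ^ 2 = ∑ i ∈ s, ∑ j ∈ s, a i * a j * ⟪x i, x j⟫_ℝ := by
    rw [← real_inner_self_eq_norm_sq, sum_inner]
    refine sum_congr rfl fun _ _ => ?_
    simp only [inner_sum, real_inner_smul_left, real_inner_smul_right]
    exact sum_congr rfl fun _ _ => by ring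
  have expand : ∑ i ∈ s, ∑ j ∈ s, a i * a j * ‖x i - x j‖ ^ 2 =
      ∑ i ∈ s, ∑ j ∈ s, a i * a j * ‖x i‖ ^ 2 + ∑ i ∈ s, ∑ j ∈ s, a i * a j * ‖x j‖ ^ 2 -
        2 * ∑ i ∈ s, ∑ j ∈ s, a i * a j * ⟪x i, x j⟫_ℝ := by
    simp only [mul_sum, ← sum_add_distrib, ← sum_sub_distrib]
    exact sum_congr rfl fun _ _ => sum_congr rfl fun _ _ => by rw [norm_sub_sq_real]; ring
  rw [expand, h₁, h₂, h₃]
  ring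

section NegativeType

variable {Z : Type*} {ρ : Z → Z → ℝ}

theorem gromovProduct_comm (hsymm : ∀ z w, ρ z w = ρ w z) (z₀ z w : Z) :
    gromovProduct ρ z₀ z w = gromovProduct ρ z₀ w z := by
  simp only [gromovProduct, hsymm z w]
  ring

theorem IsNegativeType.sum_sum_mul_le_zero (hρ : IsNegativeType ρ) {ι : Type*} [Fintype ι]
    (z : ι → Z) (a : ι → ℝ) (ha : ∑ i, a i = 0) :
    ∑ i, ∑ j, a i * a j * ρ (z i) (z j) ≤ 0 := by
  rcases lt_or_ge (Fintype.card ι) 2 with hι | hι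
  · have : Subsingleton ι := Fintype.card_le_one_iff_subsingleton.mp (by omega)
    have ha₀ : ∀ i, a i = 0 := fun i => by rwa [Fintype.sum_subsingleton a i] at ha
    simp [ha₀]
  · let e := (Fintype.equivFin ι).symm
    refine Eq.trans_le ?_ (hρ _ hι (z ∘ e) (a ∘ e) ((e.sum_comp a).trans ha))
    rw [← e.sum_comp]
    exact sum_congr rfl fun i _ => (e.sum_comp _).symm

theorem IsNegativeType.sum_sum_mul_gromovProduct_nonneg (hρ : IsNegativeType ρ)
    (hsymm : ∀ z w, ρ z w = ρ w z) (hdiag : ∀ z, ρ z z = 0)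
    (z₀ : Z) {ι : Type*} [Fintype ι] (z : ι → Z) (c : ι → ℝ) :
    0 ≤ ∑ i, ∑ j, c i * c j * gromovProduct ρ z₀ (z i) (z j) := by
  have hg : ∀ i j, c i * c j * gromovProduct ρ z₀ (z i) (z j) =
      -(c i * c j * (ρ (z i) (z j) - ρ (z i) z₀ - ρ z₀ (z j) + ρ z₀ z₀)) / 2 := fun i j => by
    rw [gromovProduct, hsymm z₀, hdiag]
    ring
  have hneg := hρ.sum_sum_mul_le_zero (fun o : Option ι => o.elim z₀ z)
    (fun o : Option ι => o.elim (-∑ k, c k) c) (by simp [Fintype.sum_option])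
  rw [sum_sum_option_elim_neg_sum] at hneg
  simp only [Option.elim_some, Option.elim_none] at hneg
  simp only [hg, ← sum_div, sum_neg_distrib]
  linarith

/-- Mathlib's reproducing kernels are operator valued; a real kernel `g` is the matrix `g • 1`
with entries in `ℝ →L[ℝ] ℝ`. -/
theorem IsNegativeType.posSemidef_gromovProduct (hρ : IsNegativeType ρ)
    (hsymm : ∀ z w, ρ z w = ρ w z) (hdiag : ∀ z, ρ z z = 0) (z₀ : Z) :
    (Matrix.of fun z w => gromovProduct ρ z₀ z w • (1 : ℝ →L[ℝ] ℝ)).PosSemidef := by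
  apply (RKHS.posSemidef_tfae.out 0 2).mpr
  refine ⟨?_, fun c => ?_⟩
  · ext z w : 1
    simp [gromovProduct_comm hsymm]
  · have key := hρ.sum_sum_mul_gromovProduct_nonneg hsymm hdiag z₀ ((↑) : c.support → Z) (c ∘ (↑))
    simp only [Finsupp.sum, Matrix.of_apply, smul_apply, one_apply_eq_self, smul_eq_mul,
      Real.inner_apply, RCLike.re_to_real]
    rw [sum_comm]
    simp only [← sum_coe_sort c.support]
    convert key using 3
    simp only [Function.comp_apply]
    ring

end NegativeType

theorem IsNegativeType.exists_sq_dist_embedding {Z : Type u} [Nonempty Z] {ρ : Z → Z → ℝ}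
    (hρ : IsNegativeType ρ) (hsymm : ∀ z w, ρ z w = ρ w z) (hdiag : ∀ z, ρ z z = 0) :
    ∃ (H : Type u) (_ : NormedAddCommGroup H) (_ : InnerProductSpace ℝ H)
      (φ : Z → H), ∀ z z', ρ z z' = ‖φ z - φ z'‖ ^ 2 := by
  obtain ⟨z₀⟩ := ‹Nonempty Z›
  let K := Matrix.of fun z w => gromovProduct ρ z₀ z w • (1 : ℝ →L[ℝ] ℝ)
  have : Fact K.PosSemidef := ⟨hρ.posSemidef_gromovProduct hsymm hdiag z₀⟩
  let φ (z : Z) : RKHS.OfKernel K := RKHS.kerFun (RKHS.OfKernel K) z 1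
  have hφ (z w : Z) : ⟪φ z, φ w⟫_ℝ = gromovProduct ρ z₀ z w := by
    rw [← RKHS.kernel_inner, RKHS.OfKernel.kernel_ofKernel, gromovProduct_comm hsymm]
    simp [K]
  refine ⟨RKHS.OfKernel K, inferInstance, inferInstance, φ, fun z z' => ?_⟩
  rw [norm_sub_sq_real, ← real_inner_self_eq_norm_sq, ← real_inner_self_eq_norm_sq, hφ, hφ, hφ]
  simp only [gromovProduct, hdiag]
  ring

theorem negtype_iff_hilbert_embeddable_general {Z : Type u} [Nonempty Z] (ρ : Z → Z → ℝ)
    (hsymm : ∀ z z', ρ z z' = ρ z' z)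
    (hdiag : ∀ z, ρ z z = 0) :
    (∀ (n : ℕ), 2 ≤ n → ∀ (z : Fin n → Z) (a : Fin n → ℝ),
      (∑ i, a i) = 0 → ∑ i, ∑ j, a i * a j * ρ (z i) (z j) ≤ 0) ↔
    (∃ (H : Type u) (_ : NormedAddCommGroup H) (_ : InnerProductSpace ℝ H)
      (φ : Z → H), ∀ z z', ρ z z' = ‖φ z - φ z'‖ ^ 2) := by
  refine ⟨fun hρ => IsNegativeType.exists_sq_dist_embedding hρ hsymm hdiag, ?_⟩
  rintro ⟨H, _, _, φ, hφ⟩ n - z a ha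
  simp only [hφ]
  rw [sum_sum_mul_norm_sub_sq _ _ _ ha]
  exact mul_nonpos_of_nonpos_of_nonneg (by norm_num) (sq_nonneg _)

/-- A semi-metric `ρ` is of negative type if and only if `(Z, ρ)`
embeds into a real inner product space as squared distance:
`ρ(z,z') = ‖φ(z) − φ(z')‖²`. -/
theorem negtype_iff_hilbert_embeddable {Z : Type u} [Nonempty Z] (ρ : Z → Z → ℝ)
    (hsymm : ∀ z z', ρ z z' = ρ z' z)
    (hnonneg : ∀ z z', 0 ≤ ρ z z')
    (hdiag : ∀ z, ρ z z = 0) :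
    (∀ (n : ℕ), 2 ≤ n → ∀ (z : Fin n → Z) (a : Fin n → ℝ),
      (∑ i, a i) = 0 → ∑ i, ∑ j, a i * a j * ρ (z i) (z j) ≤ 0) ↔
    (∃ (H : Type u) (_ : NormedAddCommGroup H) (_ : InnerProductSpace ℝ H)
      (φ : Z → H), ∀ z z', ρ z z' = ‖φ z - φ z'‖ ^ 2) :=
  negtype_iff_hilbert_embeddable_general ρ hsymm hdiag
end

section
/- Let 0 < α ≤ p ≤ 2 and let x₁,…,xₙ : ℕ → ℝ be sequences with ∑_{t} |x_i(t)|^p < ∞ for each i. Then the matrix with entries exp(−‖x_i − x_j‖_p^α), where ‖x − y‖_p = (∑_{t} |x(t) − y(t)|^p)^{1/p}, is positive semidefinite: for all real c₁,…,cₙ, ∑_{i=1}^n ∑_{j=1}^n c_i c_j exp(−‖x_i − x_j‖_p^α) ≥ 0. In other words, the function F(t) = exp(−t^α) is radial positive definite on the space ℓ^p for 0 < α ≤ p ≤ 2. -/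
/-!
The kernel `(i, j) ↦ ‖xᵢ - xⱼ‖_p ^ p = ∑ₜ |xᵢ t - xⱼ t| ^ p` is conditionally negative definite:
each summand is `((xᵢ t - xⱼ t) ^ 2) ^ (p / 2)`, squared differences are conditionally negative
definite, and powers `0 < γ ≤ 1` preserve this property because `u ^ γ` is a positive multiple of
`∫₀^∞ (1 - exp (-u s)) s ^ (-1 - γ) ds`. Hence so is `‖xᵢ - xⱼ‖_p ^ α`, its power of exponent
`α / p ≤ 1`. Schoenberg's theorem turns a conditionally negative definite kernel `A` into the
positive semidefinite kernel `exp (-A)`; it rests on the Schur product theorem, through the power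
series of `exp`.
-/

open Finset Real MeasureTheory Set

section QuadraticForm

variable {ι : Type*} [Fintype ι]

theorem sum_sum_mul_tsum {β : Type*} {f : β → ι → ι → ℝ} (hf : ∀ i j, Summable (f · i j))
    (c : ι → ℝ) :
    ∑ i, ∑ j, c i * c j * ∑' t, f t i j = ∑' t, ∑ i, ∑ j, c i * c j * f t i j := by
  have hf' i j : Summable fun t => c i * c j * f t i j := (hf i j).mul_left _
  calc ∑ i, ∑ j, c i * c j * ∑' t, f t i j = ∑ i, ∑' t, ∑ j, c i * c j * f t i j := by
        simp_rw [← tsum_mul_left]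
        exact sum_congr rfl fun i _ => (Summable.tsum_finsetSum fun j _ => hf' i j).symm
    _ = _ := (Summable.tsum_finsetSum fun i _ => summable_sum fun j _ => hf' i j).symm

theorem sum_sum_mul_integral {X : Type*} [MeasurableSpace X] {μ : Measure X}
    {f : X → ι → ι → ℝ} (hf : ∀ i j, Integrable (f · i j) μ) (c : ι → ℝ) :
    ∑ i, ∑ j, c i * c j * ∫ x, f x i j ∂μ = ∫ x, ∑ i, ∑ j, c i * c j * f x i j ∂μ := by
  have hf' i j : Integrable (fun x => c i * c j * f x i j) μ := (hf i j).const_mul _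
  simp_rw [← integral_const_mul]
  rw [integral_finsetSum _ fun i _ => integrable_finsetSum _ fun j _ => hf' i j]
  exact sum_congr rfl fun i _ => (integral_finsetSum _ fun j _ => hf' i j).symm

end QuadraticForm

section IntegralRepresentation

variable {γ : ℝ}

theorem integral_comp_mul_left_mul_rpow_Ioi (g : ℝ → ℝ) {u : ℝ} (hu : 0 < u) :
    ∫ s in Ioi 0, g (u * s) * s ^ (-1 - γ) = u ^ γ * ∫ s in Ioi 0, g s * s ^ (-1 - γ) := by
  have hscale : ∀ s ∈ Ioi (0 : ℝ),
      g (u * s) * s ^ (-1 - γ) = u ^ (1 + γ) * (g (u * s) * (u * s) ^ (-1 - γ)) := by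
    intro s hs
    rw [mul_rpow hu.le (le_of_lt hs), mul_left_comm, ← mul_assoc (u ^ (1 + γ)), ← rpow_add hu]
    simp
  rw [setIntegral_congr_fun measurableSet_Ioi hscale, integral_const_mul,
    integral_comp_mul_left_Ioi (fun t => g t * t ^ (-1 - γ)) 0 hu, mul_zero, smul_eq_mul,
    ← mul_assoc, ← rpow_neg_one, ← rpow_add hu]
  ring_nf

theorem one_sub_exp_neg_mem_Icc {x : ℝ} (hx : 0 ≤ x) : 1 - rexp (-x) ∈ Icc 0 (min x 1) := by
  refine ⟨sub_nonneg.2 (exp_le_one_iff.2 (neg_nonpos.2 hx)), le_min ?_ ?_⟩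
  · linarith [add_one_le_exp (-x)]
  · linarith [exp_pos (-x)]

theorem integrableOn_one_sub_exp_neg_mul_mul_rpow (hγ0 : 0 < γ) (hγ1 : γ < 1) {u : ℝ}
    (hu : 0 ≤ u) :
    IntegrableOn (fun s => (1 - rexp (-(u * s))) * s ^ (-1 - γ)) (Ioi 0) := by
  have hmeas {t : Set ℝ} (ht : t ⊆ Ioi 0) (hmt : MeasurableSet t) :
      AEStronglyMeasurable (fun s => (1 - rexp (-(u * s))) * s ^ (-1 - γ)) (volume.restrict t) :=
    ContinuousOn.aestronglyMeasurable (ContinuousOn.mul (by fun_prop)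
      (continuousOn_id.rpow_const fun s hs => Or.inl (ht hs).ne')) hmt
  have hbound {s : ℝ} (hs : 0 < s) :
      ‖(1 - rexp (-(u * s))) * s ^ (-1 - γ)‖ ≤ min (u * s) 1 * s ^ (-1 - γ) := by
    have h := one_sub_exp_neg_mem_Icc (mul_nonneg hu hs.le)
    rw [norm_of_nonneg (mul_nonneg h.1 (rpow_nonneg hs.le _))]
    exact mul_le_mul_of_nonneg_right h.2 (rpow_nonneg hs.le _)
  rw [← Ioc_union_Ioi_eq_Ioi zero_le_one]
  refine IntegrableOn.union ?_ ?_
  · refine Integrable.mono' ((intervalIntegral.intervalIntegrable_rpow' (a := 0) (b := 1)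
      (show -1 < -γ by linarith)).1.const_mul u) (hmeas Ioc_subset_Ioi_self measurableSet_Ioc) ?_
    refine (ae_restrict_iff' measurableSet_Ioc).2 (ae_of_all _ fun s hs => (hbound hs.1).trans ?_)
    calc min (u * s) 1 * s ^ (-1 - γ) ≤ u * s * s ^ (-1 - γ) :=
          mul_le_mul_of_nonneg_right (min_le_left _ _) (rpow_nonneg hs.1.le _)
      _ = u * s ^ (1 + (-1 - γ)) := by rw [rpow_add hs.1, rpow_one, mul_assoc]
      _ = u * s ^ (-γ) := by ring_nf
  · refine Integrable.mono' (integrableOn_Ioi_rpow_of_lt (a := -1 - γ) (by linarith) one_pos)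
      (hmeas (Ioi_subset_Ioi zero_le_one) measurableSet_Ioi) ?_
    refine (ae_restrict_iff' measurableSet_Ioi).2 (ae_of_all _ fun s hs => ?_)
    have hs0 : (0 : ℝ) < s := one_pos.trans hs
    simpa using (hbound hs0).trans
      (mul_le_mul_of_nonneg_right (min_le_right (u * s) 1) (rpow_nonneg hs0.le (-1 - γ)))

theorem integral_one_sub_exp_neg_mul_mul_rpow (hγ0 : 0 < γ) {u : ℝ} (hu : 0 ≤ u) :
    ∫ s in Ioi 0, (1 - rexp (-(u * s))) * s ^ (-1 - γ)
      = u ^ γ * ∫ s in Ioi 0, (1 - rexp (-s)) * s ^ (-1 - γ) := by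
  rcases hu.eq_or_lt with rfl | hu
  · simp [zero_rpow hγ0.ne']
  · exact integral_comp_mul_left_mul_rpow_Ioi (fun t => 1 - rexp (-t)) hu

theorem integral_one_sub_exp_neg_mul_rpow_pos (hγ0 : 0 < γ) (hγ1 : γ < 1) :
    0 < ∫ s in Ioi 0, (1 - rexp (-s)) * s ^ (-1 - γ) := by
  have hint := integrableOn_one_sub_exp_neg_mul_mul_rpow hγ0 hγ1 zero_le_one
  simp only [one_mul] at hint
  have hpos : ∀ s ∈ Ioi (0 : ℝ), 0 < (1 - rexp (-s)) * s ^ (-1 - γ) := fun s hs =>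
    mul_pos (sub_pos.2 (exp_lt_one_iff.2 (neg_lt_zero.2 hs))) (rpow_pos_of_pos hs _)
  have hsupp :
      Function.support (fun s => (1 - rexp (-s)) * s ^ (-1 - γ)) ∩ Set.Ioi 0 = Set.Ioi 0 :=
    inter_eq_right.2 fun s hs => (hpos s hs).ne'
  rw [setIntegral_pos_iff_support_of_nonneg_ae
    ((ae_restrict_iff' measurableSet_Ioi).2 (ae_of_all _ fun s hs => (hpos s hs).le)) hint,
    hsupp, volume_Ioi]
  exact ENNReal.zero_lt_top

end IntegralRepresentation

theorem summable_abs_sub_rpow {β : Type*} {p : ℝ} (hp : 0 < p) {f g : β → ℝ}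
    (hf : Summable fun t => |f t| ^ p) (hg : Summable fun t => |g t| ^ p) :
    Summable fun t => |f t - g t| ^ p := by
  have hp' : 0 < (ENNReal.ofReal p).toReal := by rwa [ENNReal.toReal_ofReal hp.le]
  have hℓp {h : β → ℝ} (hh : Summable fun t => |h t| ^ p) : Memℓp h (ENNReal.ofReal p) :=
    memℓp_gen (by simpa [ENNReal.toReal_ofReal hp.le] using hh)
  simpa [ENNReal.toReal_ofReal hp.le] using ((hℓp hf).sub (hℓp hg)).summable hp'

namespace Matrix

variable {ι : Type*} [Fintype ι]

def IsCondNegDef (A : Matrix ι ι ℝ) : Prop :=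
  A.IsSymm ∧ ∀ c : ι → ℝ, ∑ i, c i = 0 → ∑ i, ∑ j, c i * c j * A i j ≤ 0

theorem posSemidef_iff_sum_sum {A : Matrix ι ι ℝ} :
    A.PosSemidef ↔ A.IsSymm ∧ ∀ c : ι → ℝ, 0 ≤ ∑ i, ∑ j, c i * c j * A i j := by
  rw [posSemidef_iff_dotProduct_mulVec, isHermitian_iff_isSymm]
  refine and_congr_right fun _ => forall_congr' fun c => ?_
  simp only [star_trivial, dotProduct, mulVec, Finset.mul_sum]
  exact le_iff_le_of_cmp_eq_cmp (by congr! 3 with i _ j _; ring)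

theorem PosSemidef.map_pow {A : Matrix ι ι ℝ} (hA : A.PosSemidef) (m : ℕ) :
    (A.map (· ^ m)).PosSemidef := by
  induction m with
  | zero =>
    convert posSemidef_vecMulVec_self_star (1 : ι → ℝ) using 1
    ext; simp [vecMulVec]
  | succ m ih =>
    have hsucc : A.map (· ^ (m + 1)) = A.map (· ^ m) ⊙ A := by ext; simp [pow_succ]
    exact hsucc ▸ ih.hadamard hA

theorem PosSemidef.map_exp {A : Matrix ι ι ℝ} (hA : A.PosSemidef) : (A.map rexp).PosSemidef := by
  refine posSemidef_iff_sum_sum.2 ⟨(posSemidef_iff_sum_sum.1 hA).1.map _, fun c => ?_⟩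
  have hpow m := (posSemidef_iff_sum_sum.1 (hA.map_pow m)).2 c
  simp only [map_apply] at hpow
  simp only [map_apply, exp_eq_exp_ℝ, NormedSpace.exp_eq_tsum_div]
  rw [sum_sum_mul_tsum fun i j => Real.summable_pow_div_factorial (A i j)]
  refine tsum_nonneg fun m => ?_
  simpa only [mul_div_assoc', ← Finset.sum_div] using div_nonneg (hpow m) (by positivity)

theorem IsCondNegDef.posSemidef_of_basepoint {A : Matrix ι ι ℝ} (hA : A.IsCondNegDef) (k : ι) :
    (of fun i j => A i k + A j k - A i j - A k k).PosSemidef := by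
  classical
  have hsymm i j : A j i = A i j := hA.1.apply i j
  refine posSemidef_iff_sum_sum.2
    ⟨IsSymm.ext fun i j => by simp only [of_apply, hsymm i j]; ring, fun c => ?_⟩
  -- The form of the new kernel at `c` is minus the form of `A` at `c - (∑ c) • Pi.single k 1`,
  -- a vector with zero sum.
  set S := ∑ i, c i
  set T := ∑ i, c i * A i k
  set Q := ∑ i, ∑ j, c i * c j * A i j
  set e : ι → ℝ := fun i => if i = k then S else 0
  have hformB : ∑ i, ∑ j, c i * c j * (A i k + A j k - A i j - A k k)
      = 2 * S * T - Q - S ^ 2 * A k k := by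
    calc _ = ∑ i, ∑ j, ((c i * A i k) * c j + c i * (c j * A j k) - c i * c j * A i j
          - c i * c j * A k k) := by simp only [mul_add, mul_sub, mul_comm, mul_left_comm]
      _ = 2 * S * T - Q - S ^ 2 * A k k := by
          simp only [sum_add_distrib, sum_sub_distrib, ← sum_mul_sum, ← sum_mul]
          ring
  have he : ∀ f : ι → ℝ, ∑ i, e i * f i = S * f k := by simp [e]
  have hformA : ∑ i, ∑ j, (c i - e i) * (c j - e j) * A i j = Q - 2 * S * T + S ^ 2 * A k k := by
    calc _ = ∑ i, ∑ j, (c i * c j * A i j - e i * (c j * A i j) - e j * (c i * A i j)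
          + e i * (e j * A i j)) := sum_congr rfl fun i _ => sum_congr rfl fun j _ => by ring
      _ = Q - 2 * S * T + S ^ 2 * A k k := by
          simp only [sum_add_distrib, sum_sub_distrib, ← mul_sum, he, hsymm _ k]
          ring
  have hsum : ∑ i, (c i - e i) = 0 := by simp [e, S]
  simp only [of_apply]
  linarith [hA.2 _ hsum]

theorem IsCondNegDef.posSemidef_map_exp_neg {A : Matrix ι ι ℝ} (hA : A.IsCondNegDef) :
    (A.map fun a => rexp (-a)).PosSemidef := by
  classical
  rcases isEmpty_or_nonempty ι with hι | ⟨⟨k⟩⟩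
  · rw [Subsingleton.elim (A.map _) 0]
    exact .zero
  set f : ι → ℝ := fun i => rexp (A k k / 2 - A i k)
  have h : A.map (fun a => rexp (-a)) = diagonal f *
      (of fun i j => A i k + A j k - A i j - A k k).map rexp * (diagonal f)ᴴ := by
    ext i j
    simp only [map_apply, diagonal_conjTranspose, diagonal_mul, mul_diagonal, of_apply, f,
      star_trivial, ← Real.exp_add]
    ring_nf
  exact h ▸ (hA.posSemidef_of_basepoint k).map_exp.mul_mul_conjTranspose_same _

theorem IsCondNegDef.smul {A : Matrix ι ι ℝ} (hA : A.IsCondNegDef) {s : ℝ} (hs : 0 ≤ s) :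
    (s • A).IsCondNegDef := by
  refine ⟨hA.1.smul s, fun c hc => ?_⟩
  simp only [smul_apply, smul_eq_mul, mul_left_comm _ s, ← mul_sum]
  exact mul_nonpos_of_nonneg_of_nonpos hs (hA.2 c hc)

theorem isCondNegDef_sq_sub (u : ι → ℝ) : (of fun i j => (u i - u j) ^ 2).IsCondNegDef := by
  refine ⟨IsSymm.ext fun i j => by simp only [of_apply]; ring, fun c hc => ?_⟩
  have h : ∑ i, ∑ j, c i * c j * (u i - u j) ^ 2 = -2 * (∑ i, c i * u i) ^ 2 := by
    calc _ = ∑ i, ∑ j, ((c i * u i ^ 2) * c j + c i * (c j * u j ^ 2)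
          - 2 * ((c i * u i) * (c j * u j))) :=
          sum_congr rfl fun i _ => sum_congr rfl fun j _ => by ring
      _ = -2 * (∑ i, c i * u i) ^ 2 := by
          simp only [sum_add_distrib, sum_sub_distrib, ← mul_sum, ← sum_mul, hc, mul_zero,
            zero_mul, zero_add]
          ring
  simp only [of_apply, h]
  nlinarith [sq_nonneg (∑ i, c i * u i)]

theorem IsCondNegDef.tsum {β : Type*} {A : β → Matrix ι ι ℝ} (hA : ∀ t, (A t).IsCondNegDef)
    (hsum : ∀ i j, Summable (A · i j)) : (of fun i j => ∑' t, A t i j).IsCondNegDef := by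
  refine ⟨IsSymm.ext fun i j => by simp only [of_apply, (hA _).1.apply i j], fun c hc => ?_⟩
  simp only [of_apply]
  rw [sum_sum_mul_tsum hsum]
  exact tsum_nonpos fun t => (hA t).2 c hc

theorem IsCondNegDef.map_rpow {A : Matrix ι ι ℝ} (hA : A.IsCondNegDef) (hA0 : ∀ i j, 0 ≤ A i j)
    {γ : ℝ} (hγ0 : 0 < γ) (hγ1 : γ ≤ 1) : (A.map (· ^ γ)).IsCondNegDef := by
  rcases hγ1.eq_or_lt with rfl | hγ1
  · simpa using hA
  refine ⟨hA.1.map _, fun c hc => ?_⟩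
  set C := ∫ s in Ioi 0, (1 - rexp (-s)) * s ^ (-1 - γ) with hC_def
  have hC : 0 < C := integral_one_sub_exp_neg_mul_rpow_pos hγ0 hγ1
  have hrepr : (∑ i, ∑ j, c i * c j * A.map (· ^ γ) i j) * C
      = ∫ s in Ioi 0, ∑ i, ∑ j, c i * c j * ((1 - rexp (-(A i j * s))) * s ^ (-1 - γ)) := by
    rw [← sum_sum_mul_integral fun i j =>
      integrableOn_one_sub_exp_neg_mul_mul_rpow hγ0 hγ1 (hA0 i j)]
    simp only [map_apply, integral_one_sub_exp_neg_mul_mul_rpow hγ0 (hA0 _ _), ← hC_def, sum_mul,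
      mul_assoc]
  have hpt : ∀ s ∈ Ioi (0 : ℝ),
      ∑ i, ∑ j, c i * c j * ((1 - rexp (-(A i j * s))) * s ^ (-1 - γ)) ≤ 0 := by
    intro s hs
    have hpsd := (posSemidef_iff_sum_sum.1 (hA.smul (le_of_lt hs)).posSemidef_map_exp_neg).2 c
    simp only [map_apply, smul_apply, smul_eq_mul, mul_comm s] at hpsd
    calc _ = s ^ (-1 - γ) *
          (∑ i, ∑ j, c i * c j - ∑ i, ∑ j, c i * c j * rexp (-(A i j * s))) := by
          simp only [← sum_sub_distrib, mul_sum]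
          exact sum_congr rfl fun i _ => sum_congr rfl fun j _ => by ring
      _ ≤ 0 := by
          rw [← sum_mul_sum, hc, zero_mul, zero_sub]
          exact mul_nonpos_of_nonneg_of_nonpos (rpow_nonneg (le_of_lt hs) _) (neg_nonpos.2 hpsd)
  exact nonpos_of_mul_nonpos_left (hrepr ▸ setIntegral_nonpos measurableSet_Ioi hpt) hC

theorem isCondNegDef_tsum_abs_sub_rpow {β : Type*} {p : ℝ} (hp0 : 0 < p) (hp2 : p ≤ 2)
    {x : ι → β → ℝ} (hx : ∀ i, Summable fun t => |x i t| ^ p) :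
    (of fun i j => ∑' t, |x i t - x j t| ^ p).IsCondNegDef := by
  refine IsCondNegDef.tsum (A := fun t => of fun i j => |x i t - x j t| ^ p) (fun t => ?_)
    fun i j => summable_abs_sub_rpow hp0 (hx i) (hx j)
  have h := (isCondNegDef_sq_sub (x · t)).map_rpow (fun _ _ => sq_nonneg _) (half_pos hp0)
    (by linarith)
  have e : (of fun i j => |x i t - x j t| ^ p)
      = (of fun i j => (x i t - x j t) ^ 2).map (· ^ (p / 2)) := by
    ext i j
    rw [map_apply, of_apply, of_apply, ← sq_abs, ← rpow_natCast, ← rpow_mul (abs_nonneg _)]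
    ring_nf
  exact e ▸ h

end Matrix

theorem exp_rpow_radial_posdef_lp_general (p α : ℝ) (hα : 0 < α) (hαp : α ≤ p) (hp2 : p ≤ 2)
    (n : ℕ) (x : Fin n → ℕ → ℝ)
    (hx : ∀ i, Summable (fun t => |x i t| ^ p)) (c : Fin n → ℝ) :
    0 ≤ ∑ i, ∑ j, c i * c j *
      Real.exp (-(((∑' t, |x i t - x j t| ^ p) ^ (1 / p)) ^ α)) := by
  have hp : 0 < p := hα.trans_le hαp
  have hD := Matrix.isCondNegDef_tsum_abs_sub_rpow hp hp2 hx
  have hD0 i j : 0 ≤ ∑' t, |x i t - x j t| ^ p := tsum_nonneg fun t => by positivity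
  have hK := (hD.map_rpow hD0 (div_pos hα hp) ((div_le_one hp).2 hαp)).posSemidef_map_exp_neg
  convert (Matrix.posSemidef_iff_sum_sum.1 hK).2 c using 6 with i _ j _
  simp only [Matrix.map_apply, Matrix.of_apply, ← rpow_mul (hD0 i j), one_div_mul_eq_div]

/-- For `0 < α ≤ p ≤ 2`, the function `F(t) = exp(−t^α)` is radial
positive definite on `ℓ^p`: for sequences `x₁,…,xₙ ∈ ℓ^p`, the matrix with entries
`exp(−‖x_i − x_j‖_p^α)` is positive semidefinite. -/
theorem exp_rpow_radial_posdef_lp (p α : ℝ) (hα : 0 < α) (hαp : α ≤ p) (hp2 : p ≤ 2)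
    (n : ℕ) (hn : 1 ≤ n) (x : Fin n → ℕ → ℝ)
    (hx : ∀ i, Summable (fun t => |x i t| ^ p)) (c : Fin n → ℝ) :
    0 ≤ ∑ i, ∑ j, c i * c j *
      Real.exp (-(((∑' t, |x i t - x j t| ^ p) ^ (1 / p)) ^ α)) :=
  exp_rpow_radial_posdef_lp_general p α hα hαp hp2 n x hx c
end
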